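/- arXiv:2211.00668 — 11 statements merged into one kernel-verified Lean document; each statement's English description precedes it below -/
import Mathlib

section
/- For every natural number N ≥ 2, define γ_p(N) = (1/2)·sec(π/(N+1)) and γ_s(N) = N/√(2N(N−1)). Then γ_p(N) ≤ γ_s(N), with equality if and only if N = 2; in particular γ_p(N) < γ_s(N) for all N ≥ 3. -/
/-- Strict inequality for `N ≥ 3`. -/
lemma gamma_strict_aux (N : ℕ) (h3 : 3 ≤ N) :
    (1 / 2) * (Real.cos (Real.pi / (N + 1)))⁻¹
        < (N : ℝ) / Real.sqrt (2 * N * (N - 1)) := by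
  have hn3 : (3:ℝ) ≤ (N:ℝ) := by exact_mod_cast h3
  have hn0 : (0:ℝ) < (N:ℝ) := by linarith
  have hpos : (0:ℝ) < 2 * N * (N - 1) := by nlinarith
  have hs : 0 < Real.sqrt (2 * N * (N - 1)) := Real.sqrt_pos.mpr hpos
  have hang1 : (0:ℝ) ≤ Real.pi / ((N:ℝ) + 1) := by positivity
  have hang2 : Real.pi / ((N:ℝ) + 1) ≤ Real.pi / 4 := by
    apply div_le_div_of_nonneg_left Real.pi_pos.le (by norm_num) (by linarith)
  have hcos : Real.cos (Real.pi / 4) ≤ Real.cos (Real.pi / ((N:ℝ) + 1)) := by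
    apply Real.cos_le_cos_of_nonneg_of_le_pi hang1 (by linarith [Real.pi_pos]) hang2
  rw [Real.cos_pi_div_four] at hcos
  have hx0 : (0:ℝ) < Real.cos (Real.pi / ((N:ℝ) + 1)) := by
    have : (0:ℝ) < Real.sqrt 2 / 2 := by positivity
    linarith
  have hx2 : (1:ℝ)/2 ≤ (Real.cos (Real.pi / ((N:ℝ) + 1)))^2 := by
    nlinarith [Real.sq_sqrt (by norm_num : (0:ℝ) ≤ 2), Real.sqrt_nonneg 2]
  have hkey : Real.sqrt (2 * N * (N - 1)) < 2 * N * Real.cos (Real.pi / ((N:ℝ) + 1)) := by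
    rw [Real.sqrt_lt' (by positivity)]
    nlinarith
  have hrw : (1:ℝ)/2 * (Real.cos (Real.pi / ((N:ℝ) + 1)))⁻¹
      = 1 / (2 * Real.cos (Real.pi / ((N:ℝ) + 1))) := by ring
  rw [hrw, div_lt_div_iff₀ (by positivity) hs]
  nlinarith

/-- Equality for `N = 2`. -/
lemma gamma_eq_two :
    (1 / 2) * (Real.cos (Real.pi / ((2:ℕ) + 1)))⁻¹
        = ((2:ℕ) : ℝ) / Real.sqrt (2 * (2:ℕ) * ((2:ℕ) - 1)) := by
  have h1 : ((2:ℕ):ℝ) + 1 = 3 := by norm_num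
  have h2 : (2 * ((2:ℕ):ℝ) * (((2:ℕ):ℝ) - 1)) = 2^2 := by norm_num
  rw [h1, h2, Real.cos_pi_div_three, Real.sqrt_sq (by norm_num : (0:ℝ) ≤ 2)]
  norm_num

/-- For N ≥ 2, the physical-validity threshold
`γ_p = (1/2)·sec(π/(N+1))` and the superradiant threshold
`γ_s = N/√(2N(N−1))` satisfy `γ_p ≤ γ_s`, with equality iff `N = 2`;
in particular `γ_p < γ_s` for all `N ≥ 3`. -/
theorem gamma_p_le_gamma_s (N : ℕ) (hN : 2 ≤ N) :
    (1 / 2) * (Real.cos (Real.pi / (N + 1)))⁻¹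
        ≤ (N : ℝ) / Real.sqrt (2 * N * (N - 1)) ∧
    ((1 / 2) * (Real.cos (Real.pi / (N + 1)))⁻¹
        = (N : ℝ) / Real.sqrt (2 * N * (N - 1)) ↔ N = 2) ∧
    (3 ≤ N → (1 / 2) * (Real.cos (Real.pi / (N + 1)))⁻¹
        < (N : ℝ) / Real.sqrt (2 * N * (N - 1))) := by
  rcases eq_or_lt_of_le hN with h2 | h3
  · subst h2
    exact ⟨gamma_eq_two.le, ⟨fun _ => rfl, fun _ => gamma_eq_two⟩, fun h => by omega⟩
  · have h3' : 3 ≤ N := h3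
    have hs := gamma_strict_aux N h3'
    exact ⟨hs.le, ⟨fun h => absurd h hs.ne, fun h => by omega⟩, fun _ => hs⟩
end

section
/- Let A be an N×N real symmetric matrix with A_{ij} = 0 whenever |i−j| ≠ 1, and suppose the matrix Γ = I + A is positive semidefinite. Then the squared Frobenius norm satisfies ‖A‖_F² = Σ_{i,j} A_{ij}² ≤ N, and if N is odd then ‖A‖_F² ≤ N − 1. Consequently the superradiance condition ‖A‖_F > √N can never hold for a physically valid (positive semidefinite) nearest-neighbor decoherence matrix. -/
/-!
A nearest-neighbour chain is bipartite (even versus odd sites), so conjugating by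
`diag((-1)^i)` turns `A` into `-A`. Hence `1 - A` is positive semidefinite along with `1 + A`,
and then so is `1 - A² = ½((1 + A)(1 - A)(1 + A) + (1 - A)(1 + A)(1 - A))`. Its trace
`N - ‖A‖_F²` is therefore nonnegative. For odd `N` the same conjugation gives
`det A = det (-A) = -det A`, so `A` has a kernel vector, which is an eigenvector of `1 - A²` for
the eigenvalue `1`; the trace of a positive semidefinite matrix dominates each eigenvalue.
-/

open Matrix

namespace Matrix

variable {N : ℕ}

def alternatingSigns (R : Type*) [Ring R] (N : ℕ) : Matrix (Fin N) (Fin N) R :=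
  diagonal fun i => (-1) ^ (i : ℕ)

def IsBipartiteByParity {R : Type*} [Zero R] (A : Matrix (Fin N) (Fin N) R) : Prop :=
  ∀ i j : Fin N, Even ((i : ℕ) + j) → A i j = 0

section Ring

variable {R : Type*} [Ring R]

theorem alternatingSigns_mul_self : alternatingSigns R N * alternatingSigns R N = 1 := by
  simp only [alternatingSigns, diagonal_mul_diagonal, ← pow_add, Even.neg_one_pow ⟨_, rfl⟩,
    diagonal_one]

theorem conjTranspose_alternatingSigns [StarRing R] :
    (alternatingSigns R N)ᴴ = alternatingSigns R N := by
  simp [alternatingSigns, diagonal_conjTranspose]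

end Ring

theorem IsBipartiteByParity.alternatingSigns_mul_mul {R : Type*} [CommRing R]
    {A : Matrix (Fin N) (Fin N) R} (hA : A.IsBipartiteByParity) :
    alternatingSigns R N * A * alternatingSigns R N = -A := by
  ext i j
  rw [alternatingSigns, mul_diagonal, diagonal_mul, neg_apply, mul_right_comm, ← pow_add]
  rcases Nat.even_or_odd ((i : ℕ) + j) with h | h
  · simp [hA i j h]
  · simp [h.neg_one_pow]

theorem IsBipartiteByParity.det_eq_zero {R : Type*} [CommRing R] [IsAddTorsionFree R]
    {A : Matrix (Fin N) (Fin N) R} (hA : A.IsBipartiteByParity) (hN : Odd N) : A.det = 0 := by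
  have hS : (alternatingSigns R N).det * (alternatingSigns R N).det = 1 := by
    rw [← det_mul, alternatingSigns_mul_self, det_one]
  have h := congrArg det hA.alternatingSigns_mul_mul
  rw [det_mul, det_mul, mul_right_comm, hS, one_mul, det_neg, Fintype.card_fin,
    hN.neg_one_pow, neg_one_mul] at h
  exact self_eq_neg.1 h

theorem IsBipartiteByParity.posSemidef_one_sub {R : Type*} [CommRing R] [PartialOrder R]
    [StarRing R] {A : Matrix (Fin N) (Fin N) R} (hA : A.IsBipartiteByParity)
    (h : (1 + A).PosSemidef) : (1 - A).PosSemidef := by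
  have := h.mul_mul_conjTranspose_same (alternatingSigns R N)
  rwa [conjTranspose_alternatingSigns, mul_add, add_mul, mul_one, alternatingSigns_mul_self,
    hA.alternatingSigns_mul_mul, ← sub_eq_add_neg] at this

variable {n : Type*} [Fintype n] [DecidableEq n]

open scoped ComplexOrder in
theorem PosSemidef.one_sub_mul_self {𝕜 : Type*} [RCLike 𝕜] {A : Matrix n n 𝕜}
    (hadd : (1 + A).PosSemidef) (hsub : (1 - A).PosSemidef) : (1 - A * A).PosSemidef := by
  have hsum := (hsub.mul_mul_conjTranspose_same (1 + A)).add
    (hadd.mul_mul_conjTranspose_same (1 - A))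
  rw [hadd.1.eq, hsub.1.eq,
    show (1 + A) * (1 - A) * (1 + A) + (1 - A) * (1 + A) * (1 - A) = 2 • (1 - A * A) by
      noncomm_ring] at hsum
  convert hsum.smul (show (0 : ℝ) ≤ 2⁻¹ by norm_num) using 1
  module

theorem PosSemidef.le_trace_of_mulVec_eq_smul {M : Matrix n n ℝ} (hM : M.PosSemidef)
    {v : n → ℝ} (hv : v ≠ 0) {μ : ℝ} (h : M *ᵥ v = μ • v) : μ ≤ M.trace := by
  have hμ : μ ∈ spectrum ℝ M := by
    rw [← spectrum_toLin']
    exact (Module.End.hasEigenvalue_of_hasEigenvector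
      ⟨Module.End.mem_eigenspace_iff.2 h, hv⟩).mem_spectrum
  obtain ⟨i, rfl⟩ := hM.1.spectrum_real_eq_range_eigenvalues ▸ hμ
  rw [hM.1.trace_eq_sum_eigenvalues]
  exact Finset.single_le_sum (fun j _ => hM.eigenvalues_nonneg j) (Finset.mem_univ i)

omit [DecidableEq n] in
theorem sum_sq_eq_trace_mul_transpose {m R : Type*} [Fintype m] [Semiring R]
    (A : Matrix m n R) :
    ∑ i, ∑ j, A i j ^ 2 = (A * Aᵀ).trace := by
  simp [trace, mul_apply, sq]

end Matrix

theorem no_superradiance_nearest_neighbor_chain_general (N : ℕ)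
    (A : Matrix (Fin N) (Fin N) ℝ)
    (hband : ∀ i j : Fin N, ((i.val : ℤ) - (j.val : ℤ)).natAbs ≠ 1 → A i j = 0)
    (hpsd : (1 + A).PosSemidef) :
    (∑ i : Fin N, ∑ j : Fin N, (A i j) ^ 2 ≤ (N : ℝ)) ∧
    (Odd N → ∑ i : Fin N, ∑ j : Fin N, (A i j) ^ 2 ≤ (N : ℝ) - 1) ∧
    ¬ (Real.sqrt (N : ℝ) < Real.sqrt (∑ i : Fin N, ∑ j : Fin N, (A i j) ^ 2)) := by
  have hbip : A.IsBipartiteByParity := fun i j ⟨r, hr⟩ => hband i j (by omega)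
  have hsq : (1 - A * A).PosSemidef := hpsd.one_sub_mul_self (hbip.posSemidef_one_sub hpsd)
  have hsymm : A.IsSymm := by simpa using hpsd.1.sub isHermitian_one
  have hfrob : ∑ i, ∑ j, A i j ^ 2 = N - (1 - A * A).trace := by
    rw [sum_sq_eq_trace_mul_transpose, hsymm.eq, trace_sub, trace_one, Fintype.card_fin]
    ring
  have hle : ∑ i, ∑ j, A i j ^ 2 ≤ N := by linarith [hsq.trace_nonneg]
  refine ⟨hle, fun hN => ?_, not_lt.2 (Real.sqrt_le_sqrt hle)⟩
  obtain ⟨v, hv, hAv⟩ := exists_mulVec_eq_zero_iff.2 (hbip.det_eq_zero hN)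
  have hone : 1 ≤ (1 - A * A).trace :=
    hsq.le_trace_of_mulVec_eq_smul hv (by rw [sub_mulVec, ← mulVec_mulVec, hAv]; simp)
  linarith

/-- If `A` is symmetric tridiagonal with zero main diagonal and
`Γ = I + A` is positive semidefinite, then `‖A‖_F² = Σ_{i,j} A_{ij}² ≤ N` (and
`≤ N − 1` for odd `N`); hence the superradiance condition `‖A‖_F > √N` can
never hold for a physically valid nearest-neighbor decoherence matrix. -/
theorem no_superradiance_nearest_neighbor_chain (N : ℕ)
    (A : Matrix (Fin N) (Fin N) ℝ) (hsymm : A.IsSymm)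
    (hband : ∀ i j : Fin N, ((i.val : ℤ) - (j.val : ℤ)).natAbs ≠ 1 → A i j = 0)
    (hpsd : (1 + A).PosSemidef) :
    (∑ i : Fin N, ∑ j : Fin N, (A i j) ^ 2 ≤ (N : ℝ)) ∧
    (Odd N → ∑ i : Fin N, ∑ j : Fin N, (A i j) ^ 2 ≤ (N : ℝ) - 1) ∧
    ¬ (Real.sqrt (N : ℝ) < Real.sqrt (∑ i : Fin N, ∑ j : Fin N, (A i j) ^ 2)) :=
  no_superradiance_nearest_neighbor_chain_general N A hband hpsd
end

section
/- Let D, n ≥ 1 and N = n^D, and consider the D-dimensional lattice with site set V = {1,…,n}^D, where x, y ∈ V are nearest neighbors if they differ in exactly one coordinate, by exactly 1. Let 0 ≤ γ ≤ 1/(2D), and let H_Γ be the real symmetric matrix indexed by spin configurations s : V → {0,1}, with diagonal entry H_Γ(s,s) = |{x ∈ V : s(x) = 1}| and off-diagonal entry H_Γ(s,t) = γ if t is obtained from s by exchanging the values at a nearest-neighbor pair (x,y) with s(x) ≠ s(y), and H_Γ(s,t) = 0 otherwise. Then every eigenvalue of H_Γ is at most N, and N is an eigenvalue, attained by the fully-excited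 configuration s ≡ 1 (which is an eigenvector of H_Γ with eigenvalue N). -/
open scoped Classical

/-- For the auxiliary XY Hamiltonian matrix `H_Γ` of a
`D`-dimensional nearest-neighbor array (acting on spin configurations
`s : {1,…,n}^D → {0,1}`), if `0 ≤ γ ≤ 1/(2D)` then every eigenvalue of `H_Γ`
is at most `N = n^D`, and `N` is an eigenvalue attained by the fully-excited
configuration. -/
theorem xy_hamiltonian_max_eigenvalue (D n : ℕ) (hD : 1 ≤ D) (hn : 1 ≤ n)
    (γ : ℝ) (hγ0 : 0 ≤ γ) (hγ : γ ≤ 1 / (2 * D))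
    (NN : (Fin D → Fin n) → (Fin D → Fin n) → Prop)
    (hNN : ∀ x y, NN x y ↔ ∃ α : Fin D,
      (((x α : ℤ) - (y α : ℤ)).natAbs = 1 ∧ ∀ β : Fin D, β ≠ α → x β = y β))
    (H : Matrix ((Fin D → Fin n) → Bool) ((Fin D → Fin n) → Bool) ℝ)
    (hH : H = Matrix.of fun s t =>
      if s = t then ((Finset.univ.filter fun x : Fin D → Fin n => s x = true).card : ℝ)
      else if ∃ x y : Fin D → Fin n, NN x y ∧ s x ≠ s y ∧
          t = Function.update (Function.update s x (s y)) y (s x) then γ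
      else 0) :
    (∀ μ : ℝ, Module.End.HasEigenvalue (Matrix.toLin' H) μ → μ ≤ (n : ℝ) ^ D) ∧
    H.mulVec (fun t => if t = (fun _ => true) then (1 : ℝ) else 0)
      = ((n : ℝ) ^ D) • (fun t => if t = (fun _ => true) then (1 : ℝ) else 0) ∧
    Module.End.HasEigenvalue (Matrix.toLin' H) ((n : ℝ) ^ D) := by
  subst hH
  have hNNsymm : ∀ x y, NN x y → NN y x := by
    intro x y h
    rw [hNN] at h ⊢
    obtain ⟨α, h1, h2⟩ := h
    exact ⟨α, by omega, fun β hβ => (h2 β hβ).symm⟩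
  have hNNne : ∀ x y, NN x y → x ≠ y := by
    intro x y h he
    rw [hNN] at h
    obtain ⟨α, h1, -⟩ := h
    subst he
    simp at h1
  -- number of neighbors of a fixed site is at most 2 * D
  have hnbr : ∀ x : Fin D → Fin n,
      (Finset.univ.filter fun y => NN x y).card ≤ 2 * D := by
    intro x
    set g : Fin D × Bool → (Fin D → Fin n) := fun p =>
      Function.update x p.1
        (if h : ((if p.2 then (x p.1 : ℤ) + 1 else (x p.1 : ℤ) - 1)).toNat < n
          then ⟨_, h⟩ else x p.1) with hg
    have hsub : (Finset.univ.filter fun y => NN x y) ⊆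
        Finset.image g Finset.univ := by
      intro y hy
      simp only [Finset.mem_filter, Finset.mem_univ, true_and] at hy
      rw [hNN] at hy
      obtain ⟨α, h1, h2⟩ := hy
      refine Finset.mem_image.mpr ⟨(α, decide ((x α : ℤ) < (y α : ℤ))), Finset.mem_univ _, ?_⟩
      have hyα : (if decide ((x α : ℤ) < (y α : ℤ)) = true then (x α : ℤ) + 1
          else (x α : ℤ) - 1) = (y α : ℤ) := by
        split_ifs with hb <;> simp only [decide_eq_true_eq] at hb <;> omega
      funext β
      by_cases hβ : β = α
      · subst hβ
        simp only [hg, Function.update_self]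
        have key : ∀ v : ℤ, v = ((y β : ℕ) : ℤ) →
            (if h : v.toNat < n then (⟨v.toNat, h⟩ : Fin n) else x β) = y β := by
          intro v hv
          have hc : v.toNat < n := by have := (y β).isLt; omega
          rw [dif_pos hc]
          ext
          simp only []
          omega
        exact key _ hyα
      · simp only [hg, Function.update_of_ne hβ]
        exact h2 β hβ
    calc (Finset.univ.filter fun y => NN x y).card
        ≤ (Finset.image g Finset.univ).card := Finset.card_le_card hsub
      _ ≤ (Finset.univ : Finset (Fin D × Bool)).card := Finset.card_image_le
      _ = 2 * D := by simp [Finset.card_univ, mul_comm]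
  have hswap : ∀ (s : (Fin D → Fin n) → Bool) (x y : Fin D → Fin n), x ≠ y →
      Function.update (Function.update s x (s y)) y (s x)
        = Function.update (Function.update s y (s x)) x (s y) := by
    intro s x y hxy
    funext z
    by_cases h1 : z = y
    · subst h1
      rw [Function.update_self, Function.update_of_ne (Ne.symm hxy), Function.update_self]
    · by_cases h2 : z = x
      · subst h2
        rw [Function.update_of_ne h1, Function.update_self, Function.update_self]
      · rw [Function.update_of_ne h1, Function.update_of_ne h2, Function.update_of_ne h2,
          Function.update_of_ne h1]
  have h2D : (0:ℝ) < 2 * D := by positivity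
  have hγ2D : γ * (2 * D) ≤ 1 := by
    rw [le_div_iff₀ h2D] at hγ
    push_cast
    linarith
  -- row sum bound
  have hrow : ∀ s : (Fin D → Fin n) → Bool,
      ((Finset.univ.filter fun x : Fin D → Fin n => s x = true).card : ℝ) +
      ∑ t ∈ Finset.univ.erase s,
        ‖(Matrix.of fun s t =>
          if s = t then ((Finset.univ.filter fun x : Fin D → Fin n => s x = true).card : ℝ)
          else if ∃ x y : Fin D → Fin n, NN x y ∧ s x ≠ s y ∧
              t = Function.update (Function.update s x (s y)) y (s x) then γ
          else 0) s t‖ ≤ (n : ℝ) ^ D := by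
    intro s
    set k := (Finset.univ.filter fun x : Fin D → Fin n => s x = true).card with hk
    set m := (Finset.univ.filter fun x : Fin D → Fin n => s x = false).card with hm
    have hkm : k + m = n ^ D := by
      have := Finset.card_filter_add_card_filter_not
        (s := (Finset.univ : Finset (Fin D → Fin n))) (p := fun x => s x = true)
      simp only [Bool.not_eq_true, Finset.card_univ] at this
      rw [hk, hm]
      convert this using 3
      simp [Fintype.card_fun]
    set P := Finset.univ.filter
      (fun p : (Fin D → Fin n) × (Fin D → Fin n) => NN p.1 p.2 ∧ s p.1 = true ∧ s p.2 = false)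
      with hP
    set T := Finset.univ.filter (fun t : (Fin D → Fin n) → Bool =>
      ∃ x y : Fin D → Fin n, NN x y ∧ s x ≠ s y ∧
        t = Function.update (Function.update s x (s y)) y (s x)) with hT
    have hTP : T ⊆ Finset.image
        (fun p : (Fin D → Fin n) × (Fin D → Fin n) =>
          Function.update (Function.update s p.1 (s p.2)) p.2 (s p.1)) P := by
      intro t ht
      simp only [hT, Finset.mem_filter, Finset.mem_univ, true_and] at ht
      obtain ⟨x, y, hxy, hne, htv⟩ := ht
      by_cases hsx : s x = true
      · have hsy : s y = false := by
          cases hy : s y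
          · rfl
          · exact absurd (hsx.trans hy.symm) hne
        exact Finset.mem_image.mpr ⟨(x, y), Finset.mem_filter.mpr
          ⟨Finset.mem_univ _, hxy, hsx, hsy⟩, htv.symm⟩
      · have hsx' : s x = false := by cases hx : s x; rfl; exact absurd hx hsx
        have hsy : s y = true := by
          cases hy : s y
          · exact absurd (hsx'.trans hy.symm) hne
          · rfl
        refine Finset.mem_image.mpr ⟨(y, x), Finset.mem_filter.mpr
          ⟨Finset.mem_univ _, hNNsymm x y hxy, hsy, hsx'⟩, ?_⟩
        rw [← hswap s x y (hNNne x y hxy)]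
        exact htv.symm
    have hPm : P.card ≤ m * (2 * D) := by
      have hsub : P ⊆ (Finset.univ.filter fun y : Fin D → Fin n => s y = false).biUnion
          (fun y => (Finset.univ.filter fun x => NN x y).image (fun x => (x, y))) := by
        intro p hp
        simp only [hP, Finset.mem_filter, Finset.mem_univ, true_and] at hp
        obtain ⟨hnn, hp1, hp2⟩ := hp
        refine Finset.mem_biUnion.mpr ⟨p.2, by simp [hp2], ?_⟩
        exact Finset.mem_image.mpr ⟨p.1, by simp [hnn], rfl⟩
      calc P.card ≤ _ := Finset.card_le_card hsub
        _ ≤ ∑ y ∈ Finset.univ.filter fun y : Fin D → Fin n => s y = false,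
            ((Finset.univ.filter fun x => NN x y).image (fun x => (x, y))).card :=
          Finset.card_biUnion_le
        _ ≤ ∑ y ∈ Finset.univ.filter fun y : Fin D → Fin n => s y = false, 2 * D := by
          refine Finset.sum_le_sum fun y _ => ?_
          calc ((Finset.univ.filter fun x => NN x y).image (fun x => (x, y))).card
              ≤ (Finset.univ.filter fun x => NN x y).card := Finset.card_image_le
            _ ≤ (Finset.univ.filter fun x => NN y x).card := by
              refine Finset.card_le_card fun x hx => ?_
              simp only [Finset.mem_filter, Finset.mem_univ, true_and] at hx ⊢
              exact hNNsymm x y hx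
            _ ≤ 2 * D := hnbr y
        _ = m * (2 * D) := by rw [Finset.sum_const, hm, smul_eq_mul]
    have hTm : (T.card : ℝ) ≤ (m : ℝ) * (2 * D) := by
      have : T.card ≤ m * (2 * D) :=
        le_trans (le_trans (Finset.card_le_card hTP) Finset.card_image_le) hPm
      exact_mod_cast this
    have hsum : ∑ t ∈ Finset.univ.erase s,
        ‖(Matrix.of fun s t =>
          if s = t then ((Finset.univ.filter fun x : Fin D → Fin n => s x = true).card : ℝ)
          else if ∃ x y : Fin D → Fin n, NN x y ∧ s x ≠ s y ∧
              t = Function.update (Function.update s x (s y)) y (s x) then γ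
          else 0) s t‖ ≤ γ * T.card := by
      have heq : ∀ t ∈ Finset.univ.erase s,
          ‖(Matrix.of fun s t =>
            if s = t then ((Finset.univ.filter fun x : Fin D → Fin n => s x = true).card : ℝ)
            else if ∃ x y : Fin D → Fin n, NN x y ∧ s x ≠ s y ∧
                t = Function.update (Function.update s x (s y)) y (s x) then γ
            else 0) s t‖
          = if (∃ x y : Fin D → Fin n, NN x y ∧ s x ≠ s y ∧
              t = Function.update (Function.update s x (s y)) y (s x)) then γ else 0 := by
        intro t ht
        have hts : s ≠ t := fun h => (Finset.mem_erase.mp ht).1 h.symm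
        rw [Matrix.of_apply, if_neg hts]
        split_ifs
        · exact Real.norm_of_nonneg hγ0
        · exact norm_zero
      rw [Finset.sum_congr rfl heq, ← Finset.sum_filter, Finset.sum_const,
        nsmul_eq_mul, mul_comm]
      refine mul_le_mul_of_nonneg_left ?_ hγ0
      have : (Finset.filter (fun t => ∃ x y : Fin D → Fin n, NN x y ∧ s x ≠ s y ∧
          t = Function.update (Function.update s x (s y)) y (s x)) (Finset.univ.erase s)).card
          ≤ T.card := by
        refine Finset.card_le_card fun t ht => ?_
        simp only [hT, Finset.mem_filter, Finset.mem_univ, true_and] at ht ⊢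
        exact ht.2
      exact_mod_cast this
    have hγT : γ * (T.card : ℝ) ≤ (m : ℝ) := by
      calc γ * (T.card : ℝ) ≤ γ * ((m : ℝ) * (2 * D)) :=
            mul_le_mul_of_nonneg_left hTm hγ0
        _ = (γ * (2 * D)) * m := by ring
        _ ≤ 1 * m := mul_le_mul_of_nonneg_right hγ2D (by positivity)
        _ = m := one_mul _
    have hcast : ((k : ℝ) + m) = (n : ℝ) ^ D := by
      exact_mod_cast hkm
    calc (k : ℝ) + _ ≤ (k : ℝ) + γ * T.card := by linarith [hsum]
      _ ≤ (k : ℝ) + m := by linarith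
      _ = (n : ℝ) ^ D := hcast
  -- the diagonal entry equals k
  refine ⟨?_, ?_, ?_⟩
  · intro μ hμ
    obtain ⟨s, hs⟩ := eigenvalue_mem_ball hμ
    rw [Metric.mem_closedBall, Real.dist_eq] at hs
    have h1 := (abs_le.mp hs).2
    have h2 := hrow s
    have hdiag : (Matrix.of fun s t =>
        if s = t then ((Finset.univ.filter fun x : Fin D → Fin n => s x = true).card : ℝ)
        else if ∃ x y : Fin D → Fin n, NN x y ∧ s x ≠ s y ∧
            t = Function.update (Function.update s x (s y)) y (s x) then γ
        else 0) s s = ((Finset.univ.filter fun x : Fin D → Fin n => s x = true).card : ℝ) := by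
      rw [Matrix.of_apply, if_pos rfl]
    rw [hdiag] at h1
    linarith
  · funext t
    have hcol : ∀ t : (Fin D → Fin n) → Bool,
        (Matrix.of fun s t =>
          if s = t then ((Finset.univ.filter fun x : Fin D → Fin n => s x = true).card : ℝ)
          else if ∃ x y : Fin D → Fin n, NN x y ∧ s x ≠ s y ∧
              t = Function.update (Function.update s x (s y)) y (s x) then γ
          else 0) t (fun _ => true)
        = (n : ℝ) ^ D * (if t = (fun _ => true) then (1 : ℝ) else 0) := by
      intro t
      by_cases ht : t = fun _ => true
      · subst ht
        rw [Matrix.of_apply, if_pos rfl, if_pos rfl, mul_one]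
        simp [Fintype.card_fun]
      · rw [Matrix.of_apply, if_neg ht, if_neg, if_neg ht, mul_zero]
        rintro ⟨x, y, hxy, hne, hfull⟩
        have hxney : x ≠ y := hNNne x y hxy
        have h1 : t x = true := by
          have := congrFun hfull y
          rw [Function.update_self] at this
          exact this.symm
        have h2 : t y = true := by
          have := congrFun hfull x
          rw [Function.update_of_ne hxney, Function.update_self] at this
          exact this.symm
        exact hne (h1.trans h2.symm)
    simp only [Matrix.mulVec, dotProduct, Pi.smul_apply, smul_eq_mul]
    rw [Finset.sum_eq_single (fun _ => true : (Fin D → Fin n) → Bool)]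
    · rw [if_pos rfl, mul_one, hcol]
    · intro u _ hu
      rw [if_neg hu, mul_zero]
    · intro h
      exact absurd (Finset.mem_univ _) h
  · have hmv : (Matrix.of fun s t =>
        if s = t then ((Finset.univ.filter fun x : Fin D → Fin n => s x = true).card : ℝ)
        else if ∃ x y : Fin D → Fin n, NN x y ∧ s x ≠ s y ∧
            t = Function.update (Function.update s x (s y)) y (s x) then γ
        else 0).mulVec (fun t => if t = (fun _ => true) then (1 : ℝ) else 0)
        = ((n : ℝ) ^ D) • (fun t => if t = (fun _ => true) then (1 : ℝ) else 0) := by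
      funext t
      have hcol : ∀ t : (Fin D → Fin n) → Bool,
          (Matrix.of fun s t =>
            if s = t then ((Finset.univ.filter fun x : Fin D → Fin n => s x = true).card : ℝ)
            else if ∃ x y : Fin D → Fin n, NN x y ∧ s x ≠ s y ∧
                t = Function.update (Function.update s x (s y)) y (s x) then γ
            else 0) t (fun _ => true)
          = (n : ℝ) ^ D * (if t = (fun _ => true) then (1 : ℝ) else 0) := by
        intro t
        by_cases ht : t = fun _ => true
        · subst ht
          rw [Matrix.of_apply, if_pos rfl, if_pos rfl, mul_one]
          simp [Fintype.card_fun]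
        · rw [Matrix.of_apply, if_neg ht, if_neg, if_neg ht, mul_zero]
          rintro ⟨x, y, hxy, hne, hfull⟩
          have hxney : x ≠ y := hNNne x y hxy
          have h1 : t x = true := by
            have := congrFun hfull y
            rw [Function.update_self] at this
            exact this.symm
          have h2 : t y = true := by
            have := congrFun hfull x
            rw [Function.update_of_ne hxney, Function.update_self] at this
            exact this.symm
          exact hne (h1.trans h2.symm)
      simp only [Matrix.mulVec, dotProduct, Pi.smul_apply, smul_eq_mul]
      rw [Finset.sum_eq_single (fun _ => true : (Fin D → Fin n) → Bool)]
      · rw [if_pos rfl, mul_one, hcol]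
      · intro u _ hu
        rw [if_neg hu, mul_zero]
      · intro h
        exact absurd (Finset.mem_univ _) h
    refine Module.End.hasEigenvalue_of_hasEigenvector
      (x := fun t => if t = (fun _ => true) then (1 : ℝ) else 0) ⟨?_, ?_⟩
    · rw [Module.End.mem_eigenspace_iff, Matrix.toLin'_apply, hmv]
    · intro h
      have := congrFun h (fun _ => true)
      simp at this
end

section
/- For every natural number n ≥ 2, cos(π/(n+1)) ≥ 1 − 1/n, with equality if and only if n = 2. -/
/-- For every natural number `n ≥ 2`,
`cos(π/(n+1)) ≥ 1 − 1/n`, with equality if and only if `n = 2`. -/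
theorem cos_ge_one_sub_inv (n : ℕ) (hn : 2 ≤ n) :
    1 - 1 / (n : ℝ) ≤ Real.cos (Real.pi / (n + 1)) ∧
    (Real.cos (Real.pi / (n + 1)) = 1 - 1 / (n : ℝ) ↔ n = 2) := by
  rcases eq_or_lt_of_le hn with h2 | h3
  · subst h2
    norm_num [Real.cos_pi_div_three]
  · have hN : (3 : ℝ) ≤ (n : ℝ) := by exact_mod_cast h3
    have hπ : Real.pi < 3.15 := Real.pi_lt_d2
    have hπ0 : 0 < Real.pi := Real.pi_pos
    have hn1 : (0 : ℝ) < (n : ℝ) + 1 := by linarith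
    have hkey : 1 - 1 / (n : ℝ) < 1 - (Real.pi / ((n : ℝ) + 1)) ^ 2 / 2 := by
      have hπ2 : Real.pi ^ 2 < 9.9225 := by nlinarith
      rw [div_pow, sub_lt_sub_iff_left, div_div,
        div_lt_div_iff₀ (by positivity) (by positivity)]
      nlinarith [hπ2, sq_nonneg ((n : ℝ) - 3), mul_pos hπ0 hπ0]
    have hb := Real.one_sub_sq_div_two_le_cos (x := Real.pi / ((n : ℝ) + 1))
    have hlt : 1 - 1 / (n : ℝ) < Real.cos (Real.pi / ((n : ℝ) + 1)) := lt_of_lt_of_le hkey hb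
    refine ⟨hlt.le, ?_⟩
    constructor
    · intro h; exact absurd h (ne_of_gt hlt)
    · intro h; omega
end

section
/- Let D ≥ 1 and let n_1,…,n_D be natural numbers with each n_j ≥ 2. Then [2 Σ_{j=1}^D cos(π/(n_j+1))]^{-1} ≤ [2 Σ_{j=1}^D (1 − 1/n_j)]^{-1/2}; i.e., γ_p ≤ γ_s for the hyperrectangular nearest-neighbor array, so no superradiant burst can be observed in the physically valid regime γ ≤ γ_p. -/
lemma key_term (m : ℕ) (hm : 2 ≤ m) :
    1 - 1 / (m : ℝ) ≤ Real.cos (Real.pi / (m + 1)) := by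
  rcases eq_or_lt_of_le hm with h2 | h3
  · subst h2
    rw [show ((2:ℕ):ℝ) + 1 = 3 by norm_num, Real.cos_pi_div_three]
    norm_num
  · -- m ≥ 3
    have hm3 : (3 : ℝ) ≤ (m : ℝ) := by exact_mod_cast h3
    have hm1 : (0 : ℝ) < (m : ℝ) + 1 := by positivity
    have hmpos : (0 : ℝ) < (m : ℝ) := by linarith
    have hcos := Real.one_sub_sq_div_two_le_cos (x := Real.pi / (m + 1))
    have hpi : Real.pi < 3.15 := by
      have := Real.pi_lt_d2; norm_num at this ⊢; linarith
    have hpi0 : 0 < Real.pi := Real.pi_pos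
    have hsq : (Real.pi / ((m : ℝ) + 1)) ^ 2 / 2 ≤ 1 / (m : ℝ) := by
      rw [div_pow, div_div, div_le_div_iff₀ (by positivity) hmpos]
      have : Real.pi ^ 2 ≤ 9.9225 := by nlinarith
      nlinarith [sq_nonneg ((m : ℝ) - 3)]
    linarith

/-- For edge lengths `n_1,…,n_D ≥ 2`,
`[2 Σ_j cos(π/(n_j+1))]⁻¹ ≤ [2 Σ_j (1 − 1/n_j)]^{-1/2}`, i.e. `γ_p ≤ γ_s`
for the hyperrectangular nearest-neighbor array. -/
theorem gamma_p_le_gamma_s_hyperrectangle (D : ℕ) (hD : 1 ≤ D)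
    (n : Fin D → ℕ) (hn : ∀ j, 2 ≤ n j) :
    (2 * ∑ j : Fin D, Real.cos (Real.pi / (n j + 1)))⁻¹
      ≤ (Real.sqrt (2 * ∑ j : Fin D, (1 - 1 / (n j : ℝ))))⁻¹ := by
  set S := ∑ j : Fin D, Real.cos (Real.pi / (n j + 1)) with hS
  set T := ∑ j : Fin D, (1 - 1 / (n j : ℝ)) with hT
  have hterm : ∀ j : Fin D, (1 : ℝ)/2 ≤ 1 - 1 / (n j : ℝ) := by
    intro j
    have h2 : (2 : ℝ) ≤ (n j : ℝ) := by exact_mod_cast hn j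
    have : 1 / (n j : ℝ) ≤ 1/2 := by
      rw [div_le_div_iff₀ (by linarith) (by norm_num)]; linarith
    linarith
  have hTS : T ≤ S := Finset.sum_le_sum fun j _ => key_term (n j) (hn j)
  have hThalf : (D : ℝ) / 2 ≤ T := by
    calc (D : ℝ) / 2 = ∑ _j : Fin D, (1:ℝ)/2 := by
          simp [Finset.sum_const]; ring
      _ ≤ T := Finset.sum_le_sum fun j _ => hterm j
  have hD1 : (1 : ℝ) ≤ (D : ℝ) := by exact_mod_cast hD
  have hT1 : (1 : ℝ) ≤ 2 * T := by linarith
  have hS1 : (1 : ℝ) ≤ 2 * S := by linarith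
  have hsqrtpos : 0 < Real.sqrt (2 * T) := Real.sqrt_pos.2 (by linarith)
  apply inv_anti₀ hsqrtpos
  have h1 : Real.sqrt (2 * T) ≤ Real.sqrt ((2 * S) ^ 2) := by
    apply Real.sqrt_le_sqrt; nlinarith
  calc Real.sqrt (2 * T) ≤ Real.sqrt ((2 * S) ^ 2) := h1
    _ = 2 * S := Real.sqrt_sq (by linarith)
end

section
/- For every natural number D ≥ 1 and every θ ∈ ℝ, sin²(θ/2)·[9 − 26D − 2(6D−1)cos θ − (2D−1)cos 2θ] ≤ 0, with equality exactly when sin(θ/2) = 0. -/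
/-- For every `D ≥ 1` and `θ ∈ ℝ`,
`sin²(θ/2)·[9 − 26D − 2(6D−1)cos θ − (2D−1)cos 2θ] ≤ 0`, with equality
exactly when `sin(θ/2) = 0`. -/
theorem no_burst_product_state (D : ℕ) (hD : 1 ≤ D) (θ : ℝ) :
    Real.sin (θ / 2) ^ 2 *
        (9 - 26 * D - 2 * (6 * (D : ℝ) - 1) * Real.cos θ
          - (2 * (D : ℝ) - 1) * Real.cos (2 * θ)) ≤ 0 ∧
    (Real.sin (θ / 2) ^ 2 *
        (9 - 26 * D - 2 * (6 * (D : ℝ) - 1) * Real.cos θ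
          - (2 * (D : ℝ) - 1) * Real.cos (2 * θ)) = 0
      ↔ Real.sin (θ / 2) = 0) := by
  have hD1 : (1 : ℝ) ≤ (D : ℝ) := by exact_mod_cast hD
  have hc2 : Real.cos (2 * θ) = 2 * Real.cos θ ^ 2 - 1 := Real.cos_two_mul θ
  have hc : Real.cos θ = 1 - 2 * Real.sin (θ / 2) ^ 2 := by
    have h1 : Real.cos (2 * (θ / 2)) = 2 * Real.cos (θ / 2) ^ 2 - 1 :=
      Real.cos_two_mul (θ / 2)
    have h2 : Real.sin (θ / 2) ^ 2 + Real.cos (θ / 2) ^ 2 = 1 :=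
      Real.sin_sq_add_cos_sq (θ / 2)
    have : (2 : ℝ) * (θ / 2) = θ := by ring
    rw [this] at h1
    linarith
  have hcb : Real.cos θ ≤ 1 := Real.cos_le_one θ
  have hcb' : -1 ≤ Real.cos θ := Real.neg_one_le_cos θ
  have hbr : (9 - 26 * (D : ℝ) - 2 * (6 * (D : ℝ) - 1) * Real.cos θ
      - (2 * (D : ℝ) - 1) * Real.cos (2 * θ)) < 0 := by
    rw [hc2]
    nlinarith [sq_nonneg (Real.cos θ + 1), sq_nonneg (Real.cos θ - 1)]
  have hs : 0 ≤ Real.sin (θ / 2) ^ 2 := sq_nonneg _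
  constructor
  · exact mul_nonpos_of_nonneg_of_nonpos hs (le_of_lt hbr)
  · constructor
    · intro h
      rcases mul_eq_zero.mp h with h' | h'
      · exact pow_eq_zero_iff (two_ne_zero) |>.mp h'
      · exact absurd h' (ne_of_lt hbr)
    · intro h
      rw [h]; ring
end

section
/- Fix γ ∈ ℝ with 0 ≤ γ < 1 and define, for each natural number N ≥ 1, g²_N = 1 − 1/N − 2γ²(1 − γ^{2N} − N(1−γ²))/(N²(1−γ²)²). Then N·(g²_N − 1) converges, as N → ∞, to (3γ² − 1)/(1−γ²). In particular, for sufficiently large N, g²_N > 1 if γ > 1/√3 and g²_N < 1 if γ < 1/√3, so the superradiant transition point is asymptotically γ_s = 1/√3 independently of N. -/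
open Filter Topology

/-! Writing `c = 1 - γ²`, one has the exact identity
`N (g²_N - 1) = (3γ² - 1)/c - (2γ²/c²) · (1 - γ^{2N})/N`, and for `γ² < 1` the last
quotient tends to `0`. The sign of `g²_N - 1` for large `N` is then that of `3γ² - 1`. -/

noncomputable def exponentialChainG2 (γ : ℝ) (N : ℕ) : ℝ :=
  1 - 1 / N - 2 * γ ^ 2 * (1 - γ ^ (2 * N) - N * (1 - γ ^ 2)) / ((N : ℝ) ^ 2 * (1 - γ ^ 2) ^ 2)

lemma tendsto_one_sub_pow_div_natCast {r : ℝ} (hr : |r| < 1) :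
    Tendsto (fun N : ℕ => (1 - r ^ N) / N) atTop (𝓝 0) :=
  (tendsto_const_nhds.sub (tendsto_pow_atTop_nhds_zero_of_abs_lt_one hr)).div_atTop
    tendsto_natCast_atTop_atTop

lemma natCast_mul_exponentialChainG2_sub_one {γ : ℝ} (hγ : γ ^ 2 ≠ 1) {N : ℕ} (hN : N ≠ 0) :
    N * (exponentialChainG2 γ N - 1) =
      (3 * γ ^ 2 - 1) / (1 - γ ^ 2) - 2 * γ ^ 2 / (1 - γ ^ 2) ^ 2 * ((1 - (γ ^ 2) ^ N) / N) := by
  have hc : 1 - γ ^ 2 ≠ 0 := sub_ne_zero.mpr hγ.symm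
  unfold exponentialChainG2
  rw [pow_mul]
  field_simp
  ring

lemma tendsto_natCast_mul_exponentialChainG2_sub_one {γ : ℝ} (hγ : γ ^ 2 < 1) :
    Tendsto (fun N : ℕ => N * (exponentialChainG2 γ N - 1)) atTop
      (𝓝 ((3 * γ ^ 2 - 1) / (1 - γ ^ 2))) := by
  have hr : |γ ^ 2| < 1 := by rwa [abs_of_nonneg (sq_nonneg γ)]
  have hlim := (tendsto_one_sub_pow_div_natCast hr).const_mul (2 * γ ^ 2 / (1 - γ ^ 2) ^ 2)
  rw [mul_zero] at hlim
  have hdiff := (tendsto_const_nhds (x := (3 * γ ^ 2 - 1) / (1 - γ ^ 2))).sub hlim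
  rw [sub_zero] at hdiff
  refine hdiff.congr' ?_
  filter_upwards [eventually_ne_atTop 0] with N hN
  rw [natCast_mul_exponentialChainG2_sub_one hγ.ne hN]

lemma eventually_one_lt_of_tendsto_natCast_mul_sub_one {a : ℕ → ℝ} {L : ℝ}
    (ha : Tendsto (fun N : ℕ => N * (a N - 1)) atTop (𝓝 L)) (hL : 0 < L) :
    ∀ᶠ N in atTop, 1 < a N := by
  filter_upwards [ha.eventually (eventually_gt_nhds hL)] with N hN
  exact sub_pos.mp (pos_of_mul_pos_right hN N.cast_nonneg)

lemma eventually_lt_one_of_tendsto_natCast_mul_sub_one {a : ℕ → ℝ} {L : ℝ}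
    (ha : Tendsto (fun N : ℕ => N * (a N - 1)) atTop (𝓝 L)) (hL : L < 0) :
    ∀ᶠ N in atTop, a N < 1 := by
  filter_upwards [ha.eventually (eventually_lt_nhds hL)] with N hN
  exact sub_neg.mp (neg_of_mul_neg_right hN N.cast_nonneg)

lemma one_lt_three_mul_sq_of_one_div_sqrt_three_lt {γ : ℝ} (h : 1 / √3 < γ) :
    1 < 3 * γ ^ 2 := by
  rw [one_div, ← Real.sqrt_inv, Real.sqrt_lt' (lt_of_le_of_lt (by positivity) h)] at h
  linarith

lemma three_mul_sq_lt_one_of_lt_one_div_sqrt_three {γ : ℝ} (h0 : 0 ≤ γ) (h : γ < 1 / √3) :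
    3 * γ ^ 2 < 1 := by
  rw [one_div, ← Real.sqrt_inv, Real.lt_sqrt h0] at h
  linarith

/-- For fixed `0 ≤ γ < 1`, with
`g²_N = 1 − 1/N − 2γ²(1 − γ^{2N} − N(1−γ²))/(N²(1−γ²)²)`,
`N·(g²_N − 1) → (3γ² − 1)/(1−γ²)` as `N → ∞`; in particular for large `N`,
`g²_N > 1` if `γ > 1/√3` and `g²_N < 1` if `γ < 1/√3`. -/
theorem superradiant_transition_exponential_chain (γ : ℝ)
    (h0 : 0 ≤ γ) (h1 : γ < 1)
    (g2 : ℕ → ℝ)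
    (hg2 : ∀ N : ℕ, g2 N = 1 - 1 / N
      - 2 * γ ^ 2 * (1 - γ ^ (2 * N) - N * (1 - γ ^ 2))
          / ((N : ℝ) ^ 2 * (1 - γ ^ 2) ^ 2)) :
    Filter.Tendsto (fun N : ℕ => (N : ℝ) * (g2 N - 1)) Filter.atTop
      (nhds ((3 * γ ^ 2 - 1) / (1 - γ ^ 2))) ∧
    (1 / Real.sqrt 3 < γ → ∀ᶠ N : ℕ in Filter.atTop, 1 < g2 N) ∧
    (γ < 1 / Real.sqrt 3 → ∀ᶠ N : ℕ in Filter.atTop, g2 N < 1) := by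
  obtain rfl : g2 = exponentialChainG2 γ := funext hg2
  have hγ : γ ^ 2 < 1 := pow_lt_one₀ h0 h1 two_ne_zero
  have hc : 0 < 1 - γ ^ 2 := sub_pos.mpr hγ
  have hlim := tendsto_natCast_mul_exponentialChainG2_sub_one hγ
  refine ⟨hlim, fun hs => ?_, fun hs => ?_⟩
  · have := one_lt_three_mul_sq_of_one_div_sqrt_three_lt hs
    exact eventually_one_lt_of_tendsto_natCast_mul_sub_one hlim (div_pos (by linarith) hc)
  · have := three_mul_sq_lt_one_of_lt_one_div_sqrt_three h0 hs
    exact eventually_lt_one_of_tendsto_natCast_mul_sub_one hlim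
      (div_neg_of_neg_of_pos (by linarith) hc)
end

section
/- Let N ≥ 3 be odd, 0 ≤ γ < 1, and j ∈ {0,1,…,N−1}. Then Σ_{m=0}^{N−1} γ^{min(m, N−m)} e^{2π i j m/N} = (1−γ)·(1 + γ − 2γ^{(N+1)/2}(−1)^j cos(jπ/N)) / (1 + γ² − 2γ cos(2jπ/N)). In particular, these are the N eigenvalues of the circulant matrix with first column (γ^{min(m,N−m)})_{m=0}^{N−1}. -/
/-!
With `N = 2t + 1` and `u = exp (iπj/N)`, the phases are `ω^m` for `ω = u²`, an `N`-th root of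
unity, while `u^N = (-1)^j`. Since `ω^(N-m) = ω⁻¹^m`, the sum folds into two geometric sums
`∑_{m ≤ t} (γω)^m + ∑_{m ≤ t} (γω⁻¹)^m - 1`, whose closed forms combine to the stated fraction:
the top powers are `(γω)^(t+1) = γ^(t+1) (-1)^j u` and `(γω⁻¹)^(t+1) = γ^(t+1) (-1)^j u⁻¹`, which
produces `cos (jπ/N)`. For any `N`-th root of unity `ω`, the vector `(ω^k)_k` is an eigenvector of
a circulant matrix, with eigenvalue the corresponding Fourier sum of its first column.
-/

open Finset Complex Matrix

theorem pow_val_add_of_pow_eq_one {M : Type*} [Monoid M] {N : ℕ} {ω : M} (hω : ω ^ N = 1)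
    (a b : Fin N) : ω ^ (a + b).val = ω ^ a.val * ω ^ b.val := by
  rw [Fin.val_add, ← pow_eq_pow_mod _ hω, pow_add]

theorem circulant_mulVec_pow_val {R : Type*} [CommSemiring R] {N : ℕ} [NeZero N] {ω : R}
    (hω : ω ^ N = 1) (v : Fin N → R) :
    circulant v *ᵥ (fun k => ω ^ k.val) = (∑ m, v (-m) * ω ^ m.val) • fun k => ω ^ k.val := by
  ext i
  simp only [mulVec, dotProduct, circulant_apply, Pi.smul_apply, smul_eq_mul, sum_mul]
  refine (Fintype.sum_equiv (Equiv.addLeft i) _ _ fun m => ?_).symm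
  rw [Equiv.coe_addLeft, sub_add_cancel_left, pow_val_add_of_pow_eq_one hω]
  ring

namespace Fin

theorem min_natAbs_sub_eq_min_val_sub {N : ℕ} (i k : Fin N) :
    min ((i : ℤ) - k).natAbs (N - ((i : ℤ) - k).natAbs) = min (i - k).val (N - (i - k).val) := by
  rcases le_or_gt k i with h | h
  · rw [coe_sub_iff_le.2 h]; omega
  · rw [coe_sub_iff_lt.2 h]; omega

theorem min_val_neg {N : ℕ} [NeZero N] (m : Fin N) :
    min (-m).val (N - (-m).val) = min m.val (N - m.val) := by
  rw [val_neg]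
  split_ifs with h
  · simp [h]
  · omega

end Fin

theorem sum_range_pow_min_mul_pow {K : Type*} [Field K] (g ω : K) (t : ℕ)
    (hω : ω ^ (2 * t + 1) = 1) :
    ∑ m ∈ range (2 * t + 1), g ^ min m (2 * t + 1 - m) * ω ^ m
      = ∑ m ∈ range (t + 1), (g * ω) ^ m + ∑ m ∈ range (t + 1), (g * ω⁻¹) ^ m - 1 := by
  have hsplit := sum_range_add (fun m => g ^ min m (2 * t + 1 - m) * ω ^ m) (t + 1) t
  rw [show t + 1 + t = 2 * t + 1 by ring] at hsplit
  have hnear : ∀ m ∈ range (t + 1), g ^ min m (2 * t + 1 - m) * ω ^ m = (g * ω) ^ m := by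
    intro m hm
    rw [min_eq_left (by grind), mul_pow]
  have hfar : ∀ x ∈ range t, g ^ min (t + 1 + x) (2 * t + 1 - (t + 1 + x)) * ω ^ (t + 1 + x)
      = (g * ω⁻¹) ^ (t - 1 - x + 1) := by
    intro x hx
    have hx : x < t := mem_range.1 hx
    have hinv : ω ^ (t + 1 + x) * ω ^ (t - 1 - x + 1) = 1 := by
      rw [← pow_add, show t + 1 + x + (t - 1 - x + 1) = 2 * t + 1 by omega, hω]
    rw [min_eq_right (by omega), show 2 * t + 1 - (t + 1 + x) = t - 1 - x + 1 by omega, mul_pow,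
      inv_pow, eq_inv_of_mul_eq_one_left hinv]
  rw [hsplit, sum_congr rfl hnear, sum_congr rfl hfar,
    sum_range_reflect (fun x => (g * ω⁻¹) ^ (x + 1)), sum_range_succ' (fun m => (g * ω⁻¹) ^ m)]
  ring

theorem sum_range_pow_min_mul_sq_pow_of_odd {K : Type*} [Field K] {N : ℕ} (hN : Odd N)
    {γ u c : K} (hu : u ≠ 0) (hc : c ^ 2 = 1) (huN : u ^ N = c)
    (ha : γ * u ^ 2 ≠ 1) (hb : γ * (u ^ 2)⁻¹ ≠ 1) :
    ∑ m ∈ range N, γ ^ min m (N - m) * (u ^ 2) ^ m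
      = (1 - γ) * (1 + γ - γ ^ ((N + 1) / 2) * c * (u + u⁻¹))
        / (1 + γ ^ 2 - γ * (u ^ 2 + (u ^ 2)⁻¹)) := by
  obtain ⟨t, rfl⟩ := hN
  have hω : (u ^ 2) ^ (2 * t + 1) = 1 := by rw [← pow_mul, mul_comm, pow_mul, huN, hc]
  have hsucc : 2 * (t + 1) = 2 * t + 1 + 1 := by ring
  have hA : (γ * u ^ 2) ^ (t + 1) = γ ^ (t + 1) * c * u := by
    rw [mul_pow, ← pow_mul, hsucc, pow_succ u, huN, mul_assoc]
  have hB : (γ * (u ^ 2)⁻¹) ^ (t + 1) = γ ^ (t + 1) * c * u⁻¹ := by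
    rw [mul_pow, inv_pow, ← pow_mul, hsucc, pow_succ u, huN, mul_inv,
      inv_eq_of_mul_eq_one_right (by rw [← sq, hc] : c * c = 1), mul_assoc]
  have hD : 1 + γ ^ 2 - γ * (u ^ 2 + (u ^ 2)⁻¹) = (γ * u ^ 2 - 1) * (γ * (u ^ 2)⁻¹ - 1) := by
    field_simp
    ring
  rw [sum_range_pow_min_mul_pow _ _ t hω, geom_sum_eq ha, geom_sum_eq hb, hA, hB, hD,
    show (2 * t + 1 + 1) / 2 = t + 1 by omega]
  have ha' : u ^ 2 * γ - 1 ≠ 0 := by rw [mul_comm]; exact sub_ne_zero.2 ha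
  have hb' : γ - u ^ 2 ≠ 0 := fun h => hb (by field_simp; linear_combination h)
  field_simp
  ring

theorem mul_ne_one_of_norm_lt_one {𝕜 : Type*} [NormedDivisionRing 𝕜] {z w : 𝕜} (hz : ‖z‖ < 1)
    (hw : ‖w‖ = 1) : z * w ≠ 1 := fun h => by
  have hnorm := congrArg norm h
  rw [norm_mul, hw, mul_one, norm_one] at hnorm
  exact hz.ne hnorm

theorem two_mul_cos_eq_exp_add_inv (z : ℂ) : 2 * cos z = exp (z * I) + (exp (z * I))⁻¹ := by
  rw [two_cos, neg_mul, exp_neg]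

theorem eigenvalues_ring_exponential_general (N : ℕ) (hodd : Odd N)
    (γ : ℝ) (h0 : 0 ≤ γ) (h1 : γ < 1) (j : ℕ)
    (lam : ℝ)
    (hlam : lam = (1 - γ) *
        (1 + γ - 2 * γ ^ ((N + 1) / 2) * (-1 : ℝ) ^ j * Real.cos (j * Real.pi / N)) /
        (1 + γ ^ 2 - 2 * γ * Real.cos (2 * j * Real.pi / N)))
    (Γ : Matrix (Fin N) (Fin N) ℂ)
    (hΓ : Γ = Matrix.of fun i k : Fin N =>
      ((γ : ℂ) ^ (min (((i.val : ℤ) - (k.val : ℤ)).natAbs)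
        (N - (((i.val : ℤ) - (k.val : ℤ)).natAbs))))) :
    (∑ m ∈ Finset.range N, (γ : ℂ) ^ (min m (N - m)) *
        Complex.exp (2 * Real.pi * Complex.I * j * m / N)) = (lam : ℂ) ∧
    Γ.mulVec (fun m : Fin N => Complex.exp (2 * Real.pi * Complex.I * j * m.val / N))
      = (lam : ℂ) •
        (fun m : Fin N => Complex.exp (2 * Real.pi * Complex.I * j * m.val / N)) := by
  have : NeZero N := ⟨hodd.pos.ne'⟩
  have hN : (N : ℂ) ≠ 0 := Nat.cast_ne_zero.2 hodd.pos.ne'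
  set u : ℂ := exp (Real.pi * I * j / N) with hu
  have hexp (m : ℕ) : exp (2 * Real.pi * I * j * m / N) = (u ^ 2) ^ m := by
    rw [← pow_mul, hu, ← exp_nat_mul]; congr 1; push_cast; ring
  have hcos1 : u + u⁻¹ = 2 * cos (j * Real.pi / N) := by
    rw [two_mul_cos_eq_exp_add_inv, hu]; ring_nf
  have hcos2 : u ^ 2 + (u ^ 2)⁻¹ = 2 * cos (2 * j * Real.pi / N) := by
    rw [two_mul_cos_eq_exp_add_inv, hu, ← exp_nat_mul]; push_cast; ring_nf
  have huN : u ^ N = (-1) ^ j := by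
    rw [hu, ← exp_nat_mul, ← exp_pi_mul_I, ← exp_nat_mul]; congr 1; field_simp
  have hc : ((-1 : ℂ) ^ j) ^ 2 = 1 := by rw [← pow_mul, mul_comm, pow_mul, neg_one_sq, one_pow]
  have hnorm : ‖u‖ = 1 := by rw [hu, norm_exp]; simp
  have hγ : ‖(γ : ℂ)‖ < 1 := by rwa [norm_real, Real.norm_of_nonneg h0]
  have hS : ∑ m ∈ range N, (γ : ℂ) ^ min m (N - m) * (u ^ 2) ^ m = lam := by
    rw [sum_range_pow_min_mul_sq_pow_of_odd hodd (exp_ne_zero _) hc huN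
      (mul_ne_one_of_norm_lt_one hγ (by rw [norm_pow, hnorm, one_pow]))
      (mul_ne_one_of_norm_lt_one hγ (by rw [norm_inv, norm_pow, hnorm, one_pow, inv_one])),
      hlam, hcos1, hcos2]
    push_cast
    ring
  have hΓc : Γ = circulant fun m : Fin N => (γ : ℂ) ^ min m.val (N - m.val) := by
    ext i k; rw [hΓ, of_apply, circulant_apply, Fin.min_natAbs_sub_eq_min_val_sub]
  have hω : (u ^ 2) ^ N = 1 := by rw [← pow_mul, mul_comm, pow_mul, huN, hc]
  simp only [hexp]
  refine ⟨hS, ?_⟩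
  rw [hΓc, circulant_mulVec_pow_val hω]
  simp only [Fin.min_val_neg]
  rw [Fin.sum_univ_eq_sum_range (fun m => (γ : ℂ) ^ min m (N - m) * (u ^ 2) ^ m), hS]

/-- For odd `N ≥ 3`, `0 ≤ γ < 1` and `j ∈ {0,…,N−1}`, the
discrete Fourier transform of `(γ^{min(m,N−m)})_m` equals
`(1−γ)(1 + γ − 2γ^{(N+1)/2}(−1)^j cos(jπ/N)) / (1 + γ² − 2γ cos(2jπ/N))`;
in particular these are the `N` eigenvalues of the circulant matrix with
entries `γ^{min(|i−k|, N−|i−k|)}`. -/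
theorem eigenvalues_ring_exponential (N : ℕ) (hN : 3 ≤ N) (hodd : Odd N)
    (γ : ℝ) (h0 : 0 ≤ γ) (h1 : γ < 1) (j : ℕ) (hj : j < N)
    (lam : ℝ)
    (hlam : lam = (1 - γ) *
        (1 + γ - 2 * γ ^ ((N + 1) / 2) * (-1 : ℝ) ^ j * Real.cos (j * Real.pi / N)) /
        (1 + γ ^ 2 - 2 * γ * Real.cos (2 * j * Real.pi / N)))
    (Γ : Matrix (Fin N) (Fin N) ℂ)
    (hΓ : Γ = Matrix.of fun i k : Fin N =>
      ((γ : ℂ) ^ (min (((i.val : ℤ) - (k.val : ℤ)).natAbs)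
        (N - (((i.val : ℤ) - (k.val : ℤ)).natAbs))))) :
    (∑ m ∈ Finset.range N, (γ : ℂ) ^ (min m (N - m)) *
        Complex.exp (2 * Real.pi * Complex.I * j * m / N)) = (lam : ℂ) ∧
    Γ.mulVec (fun m : Fin N => Complex.exp (2 * Real.pi * Complex.I * j * m.val / N))
      = (lam : ℂ) •
        (fun m : Fin N => Complex.exp (2 * Real.pi * Complex.I * j * m.val / N)) :=
  eigenvalues_ring_exponential_general N hodd γ h0 h1 j lam hlam Γ hΓ
end

section
/- Let N ≥ 3 be odd and 0 ≤ γ ≤ 1, and let Γ be the N×N circulant matrix with entries Γ_{ij} = γ^{min(|i−j|, N−|i−j|)}. Then Γ is positive semidefinite. (Key estimates: 1 + γ ≥ 2γ^{(N+1)/2} for all γ ∈ [0,1] with equality only at γ = 1, and 1 + γ² − 2γ cos θ ≥ (1−γ)² ≥ 0 for all θ.) -/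
/-!
Write `N = 2M + 1` and `d(i, j) ≤ M` for the cyclic distance, so that `Γ_{ij} = g(d(i, j))` with
`g k = γ ^ min k M`. The Gram matrix of the indicator vectors of the `N` cyclic windows of length
`r + 1` has entries `(r + 1 - d(i, j))₊` as long as `2r < N`, because two windows that short
overlap in at most one arc of the ring. A discrete Taylor expansion of `g` at `M` writes
`Γ = γ^M 𝟙𝟙ᵀ + ∑_{r < M} Δ²g(r) WᵣWᵣᵀ`, and `g` is convex since it is geometric up to `M` and
constant afterwards, which is where odd `N` enters. So `Γ` is a nonnegative combination of Gram
matrices.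
-/

open Finset Matrix fwdDiff

theorem eq_add_sum_range_fwdDiff_iter_two {G : Type*} [AddCommGroup G] (g : ℕ → G)
    {d M : ℕ} (hdM : d ≤ M) :
    g d = g M - (M - d) • Δ_[1] g M + ∑ r ∈ range M, (r + 1 - d) • (Δ_[1])^[2] g r := by
  induction M, hdM using Nat.le_induction with
  | base =>
    rw [sum_eq_zero fun r hr => by rw [Nat.sub_eq_zero_of_le (mem_range.mp hr), zero_smul]]
    simp
  | succ M hdM ih =>
    obtain ⟨n, rfl⟩ := Nat.exists_eq_add_of_le hdM
    rw [ih, sum_range_succ, show d + n + 1 - d = n + 1 by omega, show d + n - d = n by omega]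
    simp only [Function.iterate_succ, Function.iterate_zero, Function.comp_apply, id, fwdDiff,
      add_assoc, one_add_one_eq_two]
    module

theorem fwdDiff_iter_two_pow_min_nonneg {γ : ℝ} (h0 : 0 ≤ γ) (h1 : γ ≤ 1) (M r : ℕ) :
    0 ≤ (Δ_[1])^[2] (fun k => γ ^ min k M) r := by
  simp only [Function.iterate_succ, Function.iterate_zero, Function.comp_apply, id, fwdDiff]
  obtain h | rfl | h := lt_trichotomy (r + 1) M
  · rw [min_eq_left h, min_eq_left (by omega), min_eq_left (by omega)]
    have hconvex : γ ^ (r + 1 + 1) - γ ^ (r + 1) - (γ ^ (r + 1) - γ ^ r) =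
        γ ^ r * (1 - γ) ^ 2 := by ring
    rw [hconvex]
    positivity
  · rw [min_eq_right (by omega), min_self, min_eq_left (by omega)]
    linarith [pow_le_pow_of_le_one h0 h1 (Nat.le_add_right r 1)]
  · rw [min_eq_right (by omega : M ≤ r + 1 + 1), min_eq_right h.le, min_eq_right (by omega : M ≤ r),
      sub_self]

theorem card_filter_range_add_mod_le {N r c : ℕ} (hr : 2 * r < N) (hc : c < N) :
    #{u ∈ range N | (c + u) % N ≤ r ∧ u ≤ r} = r + 1 - min c (N - c) := by
  have hsplit : {u ∈ range N | (c + u) % N ≤ r ∧ u ≤ r} =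
      range (r + 1 - c) ∪ Ico (N - c) (r + 1) := by
    ext u
    simp only [mem_filter, mem_range, mem_union, mem_Ico]
    rw [Nat.add_mod_eq_ite, Nat.mod_eq_of_lt hc]
    by_cases hu : u < N
    · rw [Nat.mod_eq_of_lt hu]
      split_ifs <;> omega
    · omega
  rw [hsplit, card_union_of_disjoint (disjoint_left.mpr fun u hu hu' => by
    simp only [mem_range, mem_Ico] at hu hu'; omega)]
  simp only [card_range, Nat.card_Ico]
  omega

section CyclicDist

variable {N : ℕ}

def cyclicDist (i j : Fin N) : ℕ := min (i - j).val (N - (i - j).val)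

theorem cyclicDist_eq_min_natAbs (i j : Fin N) :
    cyclicDist i j = min ((i.val : ℤ) - j.val).natAbs (N - ((i.val : ℤ) - j.val).natAbs) := by
  rcases le_or_gt j i with h | h
  · rw [cyclicDist, Fin.coe_sub_iff_le.mpr h]; omega
  · rw [cyclicDist, Fin.coe_sub_iff_lt.mpr h]; omega

theorem two_mul_cyclicDist_le (i j : Fin N) : 2 * cyclicDist i j ≤ N := by
  rw [cyclicDist]; omega

def windowMatrix (N r : ℕ) : Matrix (Fin N) (Fin N) ℝ :=
  of fun i s => if (i - s).val ≤ r then 1 else 0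

theorem card_filter_sub_val_le [NeZero N] {r : ℕ} (hr : 2 * r < N) (i j : Fin N) :
    #{s | (i - s).val ≤ r ∧ (j - s).val ≤ r} = r + 1 - cyclicDist i j := by
  rw [cyclicDist, ← card_filter_range_add_mod_le hr (i - j).isLt, card_filter, card_filter,
    ← Fin.sum_univ_eq_sum_range (fun u => if ((i - j).val + u) % N ≤ r ∧ u ≤ r then 1 else 0)]
  refine Fintype.sum_equiv (Equiv.subLeft j) _ _ fun s => ?_
  simp only [Equiv.subLeft_apply, ← Fin.val_add, sub_add_sub_cancel]

theorem windowMatrix_mul_conjTranspose_apply [NeZero N] {r : ℕ} (hr : 2 * r < N) (i j : Fin N) :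
    (windowMatrix N r * (windowMatrix N r)ᴴ) i j = (r + 1 - cyclicDist i j : ℕ) := by
  rw [← card_filter_sub_val_le hr i j, card_filter, Nat.cast_sum]
  simp only [windowMatrix, mul_apply, conjTranspose_apply, of_apply, star_trivial, mul_ite,
    mul_one, mul_zero, ite_and]
  refine sum_congr rfl fun s _ => ?_
  split_ifs <;> simp

theorem of_pow_cyclicDist_eq_add_sum (γ : ℝ) (M : ℕ) :
    of (fun i j : Fin (2 * M + 1) => γ ^ cyclicDist i j) =
      γ ^ M • vecMulVec 1 1 + ∑ r ∈ range M, (Δ_[1])^[2] (fun k => γ ^ min k M) r •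
        (windowMatrix (2 * M + 1) r * (windowMatrix (2 * M + 1) r)ᴴ) := by
  ext i j
  have hd : cyclicDist i j ≤ M := by have := two_mul_cyclicDist_le i j; omega
  have htaylor := eq_add_sum_range_fwdDiff_iter_two (fun k => γ ^ min k M) hd
  rw [min_eq_left hd, min_self] at htaylor
  rw [of_apply, htaylor, Matrix.add_apply, Matrix.smul_apply, vecMulVec_apply, Matrix.sum_apply]
  congr 1
  · simp [fwdDiff]
  · refine sum_congr rfl fun r hr => ?_
    rw [Matrix.smul_apply, windowMatrix_mul_conjTranspose_apply (by simp at hr; omega),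
      nsmul_eq_mul, smul_eq_mul, mul_comm]

theorem posSemidef_of_pow_cyclicDist {γ : ℝ} (h0 : 0 ≤ γ) (h1 : γ ≤ 1) (M : ℕ) :
    (of fun i j : Fin (2 * M + 1) => γ ^ cyclicDist i j).PosSemidef := by
  rw [of_pow_cyclicDist_eq_add_sum]
  refine .add ?_ (posSemidef_sum _ fun r _ => ?_)
  · simpa using (posSemidef_vecMulVec_self_star (1 : Fin (2 * M + 1) → ℝ)).smul (pow_nonneg h0 M)
  · exact (posSemidef_self_mul_conjTranspose _).smul (fwdDiff_iter_two_pow_min_nonneg h0 h1 M r)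

end CyclicDist

theorem ring_exponential_posSemidef_general (N : ℕ) (hodd : Odd N)
    (γ : ℝ) (h0 : 0 ≤ γ) (h1 : γ ≤ 1)
    (Γ : Matrix (Fin N) (Fin N) ℝ)
    (hΓ : Γ = Matrix.of fun i j : Fin N =>
      γ ^ (min (((i.val : ℤ) - (j.val : ℤ)).natAbs)
        (N - (((i.val : ℤ) - (j.val : ℤ)).natAbs)))) :
    Γ.PosSemidef ∧
    2 * γ ^ ((N + 1) / 2) ≤ 1 + γ ∧
    (1 + γ = 2 * γ ^ ((N + 1) / 2) → γ = 1) ∧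
    (∀ θ : ℝ, (1 - γ) ^ 2 ≤ 1 + γ ^ 2 - 2 * γ * Real.cos θ) := by
  obtain ⟨M, rfl⟩ := hodd
  have hhalf : (2 * M + 1 + 1) / 2 = M + 1 := by omega
  have hpow : γ ^ (M + 1) ≤ γ := pow_le_of_le_one h0 h1 M.succ_ne_zero
  refine ⟨?_, ?_, fun heq => ?_, fun θ => ?_⟩
  · have hΓ' : Γ = of fun i j => γ ^ cyclicDist i j := by
      simp only [hΓ, cyclicDist_eq_min_natAbs]
    exact hΓ' ▸ posSemidef_of_pow_cyclicDist h0 h1 M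
  · rw [hhalf]
    linarith
  · rw [hhalf] at heq
    linarith
  · nlinarith [mul_nonneg h0 (sub_nonneg.mpr (Real.cos_le_one θ))]

/-- For odd `N ≥ 3` and `0 ≤ γ ≤ 1`, the circulant matrix with
entries `Γ_{ij} = γ^{min(|i−j|, N−|i−j|)}` is positive semidefinite.
(Key estimates: `1 + γ ≥ 2γ^{(N+1)/2}` with equality only at `γ = 1`, and
`1 + γ² − 2γ cos θ ≥ (1−γ)² ≥ 0`.) -/
theorem ring_exponential_posSemidef (N : ℕ) (hN : 3 ≤ N) (hodd : Odd N)
    (γ : ℝ) (h0 : 0 ≤ γ) (h1 : γ ≤ 1)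
    (Γ : Matrix (Fin N) (Fin N) ℝ)
    (hΓ : Γ = Matrix.of fun i j : Fin N =>
      γ ^ (min (((i.val : ℤ) - (j.val : ℤ)).natAbs)
        (N - (((i.val : ℤ) - (j.val : ℤ)).natAbs)))) :
    Γ.PosSemidef ∧
    2 * γ ^ ((N + 1) / 2) ≤ 1 + γ ∧
    (1 + γ = 2 * γ ^ ((N + 1) / 2) → γ = 1) ∧
    (∀ θ : ℝ, (1 - γ) ^ 2 ≤ 1 + γ ^ 2 - 2 * γ * Real.cos θ) :=
  ring_exponential_posSemidef_general N hodd γ h0 h1 Γ hΓ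
end

section
/- Let N ≥ 1 be a natural number, x ∈ ℝ with sin x ≠ 0, and χ ∈ ℝ. Then Σ_{j=1}^N Σ_{l=1}^N [cos²((j−l)x) + χ² sin²((j−l)x)] = (1/(4 sin² x))·[(1−χ²)(1 − cos(2Nx)) + N²(1+χ²)(1 − cos(2x))]. Consequently, for the chiral-waveguide decoherence matrix Γ_{jl} = cos((j−l)x) − iχ sin((j−l)x) one has g²(0) = 1 − 2/N + (Σ_{j,l}|Γ_{jl}|²)/N² = (1/2)(3 + χ² − 4/N) + ((1−χ²)/(2N²))·sin²(Nx)/sin²(x). -/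
/-!
Since `cos² θ + χ² sin² θ = (1 + χ²)/2 + (1 - χ²)/2 · cos 2θ`, everything reduces to the
double sum `∑_{j,l} cos (2(j - l)x) = |∑_j e^{2ijx}|²`. Multiplying the geometric sum by
`e^{2ix} - 1` gives `e^{2iNx} - 1`, and `|e^{2iθ} - 1| = 2|sin θ|`, so the double sum is
the Fejér kernel `sin²(Nx) / sin² x`.
-/

open Complex Finset

theorem sum_sum_cos_sub {ι : Type*} [Fintype ι] (f : ι → ℝ) :
    ∑ i, ∑ j, Real.cos (f i - f j) = ‖∑ i, exp (f i * I)‖ ^ 2 := by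
  have hsplit : ∑ i, ∑ j, Real.cos (f i - f j)
      = (∑ i, Real.cos (f i)) ^ 2 + (∑ i, Real.sin (f i)) ^ 2 := by
    simp only [Real.cos_sub, sum_add_distrib, sq, sum_mul_sum]
  rw [hsplit, Complex.sq_norm, normSq_apply, re_sum, im_sum]
  simp only [exp_ofReal_mul_I_re, exp_ofReal_mul_I_im, sq]

theorem norm_exp_two_mul_I_sub_one (θ : ℝ) : ‖exp (2 * θ * I) - 1‖ = 2 * |Real.sin θ| := by
  have h := norm_exp_I_mul_ofReal_sub_one (2 * θ)
  rw [mul_div_cancel_left₀ θ two_ne_zero, norm_mul, Real.norm_eq_abs, Real.norm_eq_abs,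
    abs_two] at h
  rw [← h]
  push_cast
  ring_nf

theorem sin_sq_mul_norm_sum_exp_sq (N : ℕ) (x : ℝ) :
    Real.sin x ^ 2 * ‖∑ j ∈ range N, exp (2 * (j * x) * I)‖ ^ 2 = Real.sin (N * x) ^ 2 := by
  set z := exp (2 * x * I)
  have hpow : ∀ n : ℕ, exp (2 * (n * x) * I) = z ^ n := fun n => by
    rw [← exp_nat_mul]; ring_nf
  have hgeom : (∑ j ∈ range N, z ^ j) * (z - 1) = z ^ N - 1 := geom_sum_mul z N
  have hz : ‖z - 1‖ = 2 * |Real.sin x| := norm_exp_two_mul_I_sub_one x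
  have hzN : ‖z ^ N - 1‖ = 2 * |Real.sin (N * x)| := by
    rw [← hpow, ← norm_exp_two_mul_I_sub_one]; push_cast; rfl
  have hnorm := congrArg (‖·‖ ^ 2) hgeom
  simp only [norm_mul, mul_pow, hz, hzN, sq_abs] at hnorm
  simp only [hpow]
  linarith

theorem sin_sq_mul_sum_sum_cos_two_mul_sub (N : ℕ) (x : ℝ) :
    Real.sin x ^ 2 * ∑ j : Fin N, ∑ l : Fin N, Real.cos (2 * (((j : ℝ) - l) * x))
      = Real.sin (N * x) ^ 2 := by
  have hdiff : ∀ j l : Fin N,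
      2 * (((j : ℝ) - l) * x) = 2 * ((j : ℝ) * x) - 2 * ((l : ℝ) * x) := fun _ _ => by ring
  simp only [hdiff, sum_sum_cos_sub]
  push_cast
  rw [Fin.sum_univ_eq_sum_range (fun j => exp (2 * (j * x) * I)), sin_sq_mul_norm_sum_exp_sq]

theorem cos_sq_add_mul_sin_sq (χ θ : ℝ) :
    Real.cos θ ^ 2 + χ ^ 2 * Real.sin θ ^ 2
      = (1 + χ ^ 2) / 2 + (1 - χ ^ 2) / 2 * Real.cos (2 * θ) := by
  rw [Real.sin_sq, Real.cos_sq]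
  ring

theorem norm_cos_sub_I_mul_sin_sq (χ θ : ℝ) :
    ‖(Real.cos θ : ℂ) - I * χ * Real.sin θ‖ ^ 2
      = Real.cos θ ^ 2 + χ ^ 2 * Real.sin θ ^ 2 := by
  rw [Complex.sq_norm, normSq_apply]
  simp only [sub_re, sub_im, mul_re, mul_im, I_re, I_im, ofReal_re, ofReal_im]
  ring

theorem sum_sum_cos_sq_add_mul_sin_sq (N : ℕ) (x χ : ℝ) (hx : Real.sin x ≠ 0) :
    ∑ j : Fin N, ∑ l : Fin N,
        (Real.cos (((j : ℝ) - l) * x) ^ 2 + χ ^ 2 * Real.sin (((j : ℝ) - l) * x) ^ 2)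
      = (N : ℝ) ^ 2 * ((1 + χ ^ 2) / 2)
        + (1 - χ ^ 2) / 2 * (Real.sin (N * x) ^ 2 / Real.sin x ^ 2) := by
  have hkernel : ∑ j : Fin N, ∑ l : Fin N, Real.cos (2 * (((j : ℝ) - l) * x))
      = Real.sin (N * x) ^ 2 / Real.sin x ^ 2 := by
    rw [eq_div_iff (pow_ne_zero 2 hx), mul_comm, sin_sq_mul_sum_sum_cos_two_mul_sub]
  simp only [cos_sq_add_mul_sin_sq, sum_add_distrib, ← mul_sum, hkernel, sum_const, card_univ,
    Fintype.card_fin, nsmul_eq_mul]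
  ring

/-- For `sin x ≠ 0`,
`Σ_{j,l=1}^N [cos²((j−l)x) + χ² sin²((j−l)x)]
  = (1/(4sin²x))[(1−χ²)(1 − cos(2Nx)) + N²(1+χ²)(1 − cos(2x))]`, and for the
chiral-waveguide decoherence matrix `Γ_{jl} = cos((j−l)x) − iχ sin((j−l)x)`,
`g²(0) = (1/2)(3 + χ² − 4/N) + ((1−χ²)/(2N²)) sin²(Nx)/sin²(x)`. -/
theorem g2_chiral_waveguide (N : ℕ) (hN : 1 ≤ N) (x χ : ℝ) (hx : Real.sin x ≠ 0)
    (Γ : Matrix (Fin N) (Fin N) ℂ)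
    (hΓ : Γ = Matrix.of fun j l : Fin N =>
      (Real.cos (((j.val : ℝ) - (l.val : ℝ)) * x) : ℂ)
        - Complex.I * χ * (Real.sin (((j.val : ℝ) - (l.val : ℝ)) * x) : ℂ)) :
    (∑ j : Fin N, ∑ l : Fin N,
        (Real.cos (((j.val : ℝ) - (l.val : ℝ)) * x) ^ 2
          + χ ^ 2 * Real.sin (((j.val : ℝ) - (l.val : ℝ)) * x) ^ 2))
      = (1 / (4 * Real.sin x ^ 2)) *
          ((1 - χ ^ 2) * (1 - Real.cos (2 * N * x))
            + (N : ℝ) ^ 2 * (1 + χ ^ 2) * (1 - Real.cos (2 * x))) ∧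
    1 - 2 / N + (∑ j : Fin N, ∑ l : Fin N, ‖Γ j l‖ ^ 2) / (N : ℝ) ^ 2
      = (1 / 2) * (3 + χ ^ 2 - 4 / N)
        + ((1 - χ ^ 2) / (2 * (N : ℝ) ^ 2)) *
            (Real.sin (N * x) ^ 2 / Real.sin x ^ 2) := by
  have hN0 : (N : ℝ) ≠ 0 := Nat.cast_ne_zero.mpr (by omega)
  constructor
  · rw [sum_sum_cos_sq_add_mul_sin_sq N x χ hx, mul_assoc, Real.cos_two_mul_eq_one_sub,
      Real.cos_two_mul_eq_one_sub]
    field_simp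
    ring
  · simp only [hΓ, Matrix.of_apply, norm_cos_sub_I_mul_sin_sq,
      sum_sum_cos_sq_add_mul_sin_sq N x χ hx]
    field_simp
    ring
end

section
/- Let N ≥ 7 be a natural number, set γ = 1/√(N−1), and let Γ be the N×N real matrix with Γ_{ii} = 1 and Γ_{ij} = γ for i ≠ j. Then Tr(Γ³) = (1 + γ(N−1))³ + (N−1)(1−γ)³ = N(N − 2 + 4√(N−1))/√(N−1), and Tr(Γ³) > 6N. Moreover Tr Γ = N and Tr(Γ²) = N + γ²N(N−1) = 2N, so g²(0) = 1 − 2/N + Tr(Γ²)/(Tr Γ)² = 1 exactly while Tr(Γ³) > 6N. -/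
/-- For `N ≥ 7` and `γ = 1/√(N−1)`, the all-to-all decoherence
matrix `Γ` (Dicke model with local dissipation) satisfies
`Tr Γ = N`, `Tr(Γ²) = N + γ²N(N−1) = 2N` (so `g²(0) = 1` exactly), while
`Tr(Γ³) = (1 + γ(N−1))³ + (N−1)(1−γ)³ = N(N − 2 + 4√(N−1))/√(N−1) > 6N`. -/
theorem g3_all_to_all (N : ℕ) (hN : 7 ≤ N) (γ : ℝ)
    (hγ : γ = 1 / Real.sqrt ((N : ℝ) - 1))
    (Γ : Matrix (Fin N) (Fin N) ℝ)
    (hΓ : Γ = Matrix.of fun i j : Fin N => if i = j then (1 : ℝ) else γ) :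
    (Γ * Γ * Γ).trace = (1 + γ * ((N : ℝ) - 1)) ^ 3 + ((N : ℝ) - 1) * (1 - γ) ^ 3 ∧
    (Γ * Γ * Γ).trace
      = (N : ℝ) * ((N : ℝ) - 2 + 4 * Real.sqrt ((N : ℝ) - 1)) / Real.sqrt ((N : ℝ) - 1) ∧
    6 * (N : ℝ) < (Γ * Γ * Γ).trace ∧
    Γ.trace = N ∧
    (Γ * Γ).trace = N + γ ^ 2 * N * ((N : ℝ) - 1) ∧
    (Γ * Γ).trace = 2 * N ∧
    1 - 2 / N + (Γ * Γ).trace / (Γ.trace) ^ 2 = 1 := by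
  set J : Matrix (Fin N) (Fin N) ℝ := Matrix.of (fun _ _ => (1:ℝ)) with hJ
  have hΓ' : Γ = (1 - γ) • (1 : Matrix (Fin N) (Fin N) ℝ) + γ • J := by
    rw [hΓ]; ext i j
    by_cases h : i = j <;> simp [h, hJ, Matrix.one_apply]
  have hJJ : J * J = (N : ℝ) • J := by
    ext i j
    simp [hJ, Matrix.mul_apply]
  have hJtr : J.trace = (N : ℝ) := by
    simp [Matrix.trace, hJ, Matrix.diag]
  have hItr : (1 : Matrix (Fin N) (Fin N) ℝ).trace = (N : ℝ) := by
    simp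
  have h2 : Γ * Γ = ((1-γ)^2) • (1 : Matrix (Fin N) (Fin N) ℝ)
      + (2*(1-γ)*γ + γ^2 * N) • J := by
    rw [hΓ']
    simp only [add_mul, mul_add, smul_mul_assoc, Matrix.mul_smul, hJJ, smul_smul,
      one_mul, mul_one]
    module
  have h3 : Γ * Γ * Γ = ((1-γ)^3) • (1 : Matrix (Fin N) (Fin N) ℝ)
      + (3*(1-γ)^2*γ + 3*(1-γ)*γ^2*N + γ^3*N^2) • J := by
    rw [h2, hΓ']
    simp only [add_mul, mul_add, smul_mul_assoc, Matrix.mul_smul, hJJ, smul_smul,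
      one_mul, mul_one]
    module
  have htr1 : Γ.trace = (N : ℝ) := by
    rw [hΓ']; simp [hJtr, hItr]; ring
  have htr2 : (Γ * Γ).trace = (1-γ)^2 * N + (2*(1-γ)*γ + γ^2 * N) * N := by
    rw [h2]; simp [hJtr, hItr]
  have htr3 : (Γ * Γ * Γ).trace = (1-γ)^3 * N
      + (3*(1-γ)^2*γ + 3*(1-γ)*γ^2*N + γ^3*N^2) * N := by
    rw [h3]; simp [hJtr, hItr]
  -- scalar facts
  have hN' : (7 : ℝ) ≤ (N : ℝ) := by exact_mod_cast hN
  set s : ℝ := Real.sqrt ((N : ℝ) - 1) with hs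
  have hs2 : s ^ 2 = (N : ℝ) - 1 := Real.sq_sqrt (by linarith)
  have hspos : 0 < s := Real.sqrt_pos.mpr (by linarith)
  have hγs : γ * s = 1 := by rw [hγ]; field_simp
  have hγpos : 0 < γ := by rw [hγ]; positivity
  have hNpos : (0 : ℝ) < N := by linarith
  have hγ2 : γ ^ 2 * ((N : ℝ) - 1) = 1 := by
    linear_combination (γ*s+1) * hγs - γ^2 * hs2
  have hexp : (1-γ)^3 * (N:ℝ) + (3*(1-γ)^2*γ + 3*(1-γ)*γ^2*N + γ^3*N^2) * N
      = 4*N + γ * ((N:ℝ) * ((N:ℝ)-2)) := by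
    linear_combination (3*(N:ℝ) + γ*(N:ℝ)*((N:ℝ)-2)) * hγ2
  have h6 : (Γ * Γ).trace = 2 * (N:ℝ) := by
    rw [htr2]; linear_combination (N:ℝ) * hγ2
  refine ⟨?_, ?_, ?_, htr1, ?_, h6, ?_⟩
  · rw [htr3]; ring
  · rw [htr3, hexp, eq_div_iff (ne_of_gt hspos)]
    linear_combination ((N:ℝ)*((N:ℝ)-2)) * hγs
  · rw [htr3, hexp]
    have h2s : 2 * s < (N:ℝ) - 2 := by nlinarith [hs2, hspos, hN']
    have hg2 : 2 < γ * ((N:ℝ)-2) := by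
      nlinarith [mul_lt_mul_of_pos_left h2s hγpos, hγs]
    nlinarith [mul_lt_mul_of_pos_left hg2 hNpos]
  · rw [htr2]; ring
  · rw [h6, htr1]
    have hNne : (N:ℝ) ≠ 0 := ne_of_gt hNpos
    field_simp
    ring
end
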